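/- For n ≥ 1 with Tribonacci representation e_1 e_2 ... e_r, the number of occurrences of the letter 2 in the prefix TR[0..n-1] of the Tribonacci word equals [e_1 ... e_{r-3}]_T + e_{r-2} (with the conventions that an empty word has value 0 and e_i = 0 for i ≤ 0). -/

import Mathlib

/-- Tribonacci numbers: T 0 = 0, T 1 = 1, T 2 = 1, T (n+3) = T (n+2) + T (n+1) + T n. -/
def T : ℕ → ℕ
  | 0 => 0
  | 1 => 1
  | 2 => 1
  | n + 3 => T (n + 2) + T (n + 1) + T n

/-- The Tribonacci morphism on letters: 0 ↦ 01, 1 ↦ 02, 2 ↦ 0. -/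
def σm : ℕ → List ℕ
  | 0 => [0, 1]
  | 1 => [0, 2]
  | _ => [0]

/-- The Tribonacci morphism extended to words by concatenation. -/
def σw : List ℕ → List ℕ
  | [] => []
  | a :: t => σm a ++ σw t

/-- The Tribonacci word, the fixed point of σ beginning with 0
(σ^[n+1] [0] has length > n and each σ^[m] [0] is a prefix of the next). -/
def TR (n : ℕ) : ℕ := ((σw^[n + 1]) [0]).getD n 0

/-- Number of occurrences of the letter `a` in the factor TR[i..i+n-1]. -/
def occ (a i n : ℕ) : ℕ := ((Finset.range n).filter (fun j => TR (i + j) = a)).card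

/-- Parikh vector of the factor TR[i..i+n-1], as an element of ℤ³. -/
def ψv (i n : ℕ) : ℤ × ℤ × ℤ := ((occ 0 i n : ℤ), (occ 1 i n : ℤ), (occ 2 i n : ℤ))

/-- Relative Parikh vector f(i,n) = ψ(TR[i..i+n-1]) − ψ(TR[0..n-1]). -/
def frel (i n : ℕ) : ℤ × ℤ × ℤ := ψv i n - ψv 0 n

/-- The set A_n of relative Parikh vectors. -/
def Aset (n : ℕ) : Set (ℤ × ℤ × ℤ) := {v | ∃ i, frel i n = v}

/-- Abelian complexity of TR: the number of distinct Parikh vectors of length-n factors. -/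
noncomputable def ρab (n : ℕ) : ℕ := (Aset n).ncard

/-- Value of a binary word e₁ ⋯ e_r in the Tribonacci numeration system:
[w]_T = Σ_{1 ≤ i ≤ r} e_i T_{r+2-i}.  (Index 0 of the list is e₁.) -/
def valT (w : List ℕ) : ℕ := ∑ i ∈ Finset.range w.length, w.getD i 0 * T (w.length + 1 - i)

/-- `w` is a valid Tribonacci representation: a binary word beginning with 1
and containing no factor 111. -/
def GoodRep (w : List ℕ) : Prop :=
  w.head? = some 1 ∧ (∀ d ∈ w, d ≤ 1) ∧ ¬ ([1, 1, 1] <:+: w)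

/-- The last digit of a word, with the convention that it is 0 for the empty word. -/
def lastDigit (w : List ℕ) : ℕ := w.getD (w.length - 1) 0


/-! Let `W k = σ^k(0)`, so that `W (k+3) = W (k+2) W (k+1) W k`, `|W k| = T (k+2)` and
`|W (k+3)|₂ = |W k|`. For a representation `e₁ ⋯ e_r` without factor `111`, concatenating the
blocks `W (r-i)` over the `i` with `eᵢ = 1` gives a word of length `[e₁ ⋯ e_r]_T` which is a prefix
of TR: a leading `1 0` or `1 1 0` contributes `W (m+1)` or `W (m+2) W (m+1)`, the rest fits in
`W m`, and `W (m+1) W m`, `W (m+2) W (m+1) W m` are prefixes of `W (m+2)`, `W (m+3)`.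
Counting 2s block by block, `W (r-i)` contributes `|W (r-i-3)| = T (r-i-1)`, the weight of `eᵢ` in
`[e₁ ⋯ e_{r-3}]_T`, except that `W 2 = 0102` (from `e_{r-2}`) contains one 2 and `W 1`, `W 0`
contain none. -/

lemma σw_append (u v : List ℕ) : σw (u ++ v) = σw u ++ σw v := by
  induction u with
  | nil => rfl
  | cons a u ih => simp [σw, ih]

def tribWord (k : ℕ) : List ℕ := σw^[k] [0]

lemma tribWord_succ (k : ℕ) : tribWord (k + 1) = σw (tribWord k) :=
  Function.iterate_succ_apply' _ _ _

lemma tribWord_add_three (k : ℕ) :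
    tribWord (k + 3) = tribWord (k + 2) ++ tribWord (k + 1) ++ tribWord k := by
  induction k with
  | zero => rfl
  | succ k ih =>
    calc tribWord (k + 3 + 1) = σw (tribWord (k + 3)) := tribWord_succ _
      _ = σw (tribWord (k + 2)) ++ σw (tribWord (k + 1)) ++ σw (tribWord k) := by
        rw [ih, σw_append, σw_append]
      _ = _ := by simp only [← tribWord_succ]

lemma length_tribWord : ∀ k, (tribWord k).length = T (k + 2)
  | 0 | 1 | 2 => rfl
  | k + 3 => by
    rw [tribWord_add_three, List.length_append, List.length_append, length_tribWord k,
      length_tribWord (k + 1), length_tribWord (k + 2)]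
    rfl

lemma lt_length_tribWord : ∀ k, k < (tribWord k).length
  | 0 | 1 | 2 => by decide
  | k + 3 => by
    have := lt_length_tribWord k
    have := lt_length_tribWord (k + 1)
    have := lt_length_tribWord (k + 2)
    simp only [tribWord_add_three, List.length_append]
    omega

lemma count_two_tribWord_add_three : ∀ k, (tribWord (k + 3)).count 2 = (tribWord k).length
  | 0 | 1 | 2 => by decide
  | k + 3 => by
    have h₀ := count_two_tribWord_add_three k
    have h₁ : (tribWord (k + 3 + 1)).count 2 = (tribWord (k + 1)).length :=
      count_two_tribWord_add_three (k + 1)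
    have h₂ : (tribWord (k + 3 + 2)).count 2 = (tribWord (k + 2)).length :=
      count_two_tribWord_add_three (k + 2)
    rw [tribWord_add_three (k + 3), List.count_append, List.count_append, h₀, h₁, h₂,
      tribWord_add_three k, List.length_append, List.length_append]

lemma σw_prefix {u v : List ℕ} (h : u <+: v) : σw u <+: σw v := by
  obtain ⟨t, rfl⟩ := h
  exact ⟨σw t, (σw_append u t).symm⟩

lemma tribWord_prefix_succ (k : ℕ) : tribWord k <+: tribWord (k + 1) := by
  induction k with
  | zero => exact ⟨[1], rfl⟩
  | succ k ih => rw [tribWord_succ, tribWord_succ]; exact σw_prefix ih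

lemma tribWord_prefix_of_le {j k : ℕ} (h : j ≤ k) : tribWord j <+: tribWord k := by
  induction h with
  | refl => exact List.prefix_refl _
  | step _ ih => exact ih.trans (tribWord_prefix_succ _)

lemma tribWord_append_prefix : ∀ k, tribWord (k + 1) ++ tribWord k <+: tribWord (k + 2)
  | 0 => ⟨[2], rfl⟩
  | k + 1 => by rw [tribWord_add_three k]; exact List.prefix_append _ _

lemma TR_eq_getElem_tribWord {n N : ℕ} (h : n < (tribWord N).length) :
    TR n = (tribWord N)[n] := by
  have hn : n < (tribWord (n + 1)).length :=
    (lt_length_tribWord (n + 1)).trans' n.lt_succ_self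
  rw [TR, ← tribWord, List.getD_eq_getElem _ _ hn]
  rcases le_total (n + 1) N with hle | hle
  · exact (tribWord_prefix_of_le hle).getElem hn
  · exact ((tribWord_prefix_of_le hle).getElem h).symm

lemma map_TR_range_of_prefix_tribWord {u : List ℕ} {N : ℕ} (h : u <+: tribWord N) :
    (List.range u.length).map TR = u :=
  List.ext_getElem (by simp) fun i _ hi => by
    rw [List.getElem_map, List.getElem_range, TR_eq_getElem_tribWord (hi.trans_le h.length_le),
      h.getElem]

lemma occ_eq_count (a i n : ℕ) :
    occ a i n = ((List.range n).map fun j => TR (i + j)).count a := by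
  rw [occ, Finset.card_def, Finset.filter_val, ← Multiset.countP_eq_card_filter, Finset.range_val,
    Multiset.range, Multiset.coe_countP, List.count, List.countP_map]
  rfl

lemma valT_cons (e : ℕ) (w : List ℕ) : valT (e :: w) = e * T (w.length + 2) + valT w := by
  rw [valT, List.length_cons, Finset.sum_range_succ', add_comm]
  simp [valT, Nat.add_sub_add_right]

def repWord : List ℕ → List ℕ
  | [] => []
  | e :: w => (if e = 1 then tribWord w.length else []) ++ repWord w

lemma repWord_one_cons (w : List ℕ) : repWord (1 :: w) = tribWord w.length ++ repWord w := by
  simp [repWord]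

lemma repWord_cons_of_ne_one {e : ℕ} (he : e ≠ 1) (w : List ℕ) :
    repWord (e :: w) = repWord w := by
  simp [repWord, he]

lemma length_repWord {w : List ℕ} (hw : ∀ d ∈ w, d ≤ 1) : (repWord w).length = valT w := by
  induction w with
  | nil => rfl
  | cons e w ih =>
    rw [valT_cons, ← ih fun d hd => hw d (List.mem_cons_of_mem e hd)]
    obtain rfl | rfl : e = 0 ∨ e = 1 := by have := hw e List.mem_cons_self; omega
    · simp [repWord_cons_of_ne_one]
    · simp [repWord_one_cons, length_tribWord, add_comm]

lemma repWord_prefix_tribWord :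
    ∀ w : List ℕ, ¬ [1, 1, 1] <:+: w → repWord w <+: tribWord w.length
  | [] => fun _ => List.nil_prefix
  | e :: w => fun h => by
    have hw : ¬ [1, 1, 1] <:+: w := fun hw => h (List.infix_cons hw)
    by_cases he : e = 1
    swap
    · rw [repWord_cons_of_ne_one he]
      exact (repWord_prefix_tribWord w hw).trans (tribWord_prefix_succ _)
    subst he
    rw [repWord_one_cons]
    match w with
    | [] => exact ⟨[1], rfl⟩
    | d :: w =>
      by_cases hd : d = 1
      swap
      · have hw' : ¬ [1, 1, 1] <:+: w := fun h => hw (List.infix_cons h)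
        rw [repWord_cons_of_ne_one hd, List.length_cons]
        exact ((List.prefix_append_right_inj _).2 (repWord_prefix_tribWord w hw')).trans
          (tribWord_append_prefix _)
      subst hd
      rw [repWord_one_cons, ← List.append_assoc]
      match w with
      | [] => exact ⟨[2], rfl⟩
      | g :: w =>
        have hg : g ≠ 1 := by rintro rfl; exact h ⟨[], w, rfl⟩
        have hw' : ¬ [1, 1, 1] <:+: w := fun h => hw (List.infix_cons (List.infix_cons h))
        rw [repWord_cons_of_ne_one hg, show (1 :: 1 :: g :: w).length = w.length + 3 from rfl,
          tribWord_add_three]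
        exact (List.prefix_append_right_inj _).2 (repWord_prefix_tribWord w hw')

lemma lastDigit_concat (u : List ℕ) (a : ℕ) : lastDigit (u ++ [a]) = a := by
  simp [lastDigit]

lemma count_two_repWord_append (u : List ℕ) (a b c : ℕ) :
    (repWord (u ++ [a, b, c])).count 2 = (repWord u).length + if a = 1 then 1 else 0 := by
  induction u with
  | nil => simp only [List.nil_append, repWord]; split_ifs <;> rfl
  | cons e u ih =>
    rw [List.cons_append]
    by_cases he : e = 1
    · subst he
      rw [repWord_one_cons, repWord_one_cons, List.count_append, ih, List.length_append,
        List.length_append, show [a, b, c].length = 3 from rfl, count_two_tribWord_add_three,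
        add_assoc]
    · rw [repWord_cons_of_ne_one he, repWord_cons_of_ne_one he, ih]

lemma count_two_repWord {w : List ℕ} (hw : ∀ d ∈ w, d ≤ 1) :
    (repWord w).count 2 = valT w.dropLast.dropLast.dropLast + lastDigit w.dropLast.dropLast := by
  obtain ⟨r, rfl⟩ : ∃ r, w = r.reverse := ⟨w.reverse, w.reverse_reverse.symm⟩
  match r with
  | [] | [_] | [_, _] =>
    simp [repWord, lastDigit, valT, apply_ite (List.count 2),
      show (tribWord 0).count 2 = 0 from rfl, show (tribWord 1).count 2 = 0 from rfl]
  | c :: b :: a :: u =>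
    have ha : a ≤ 1 := hw a (by simp)
    have hr : ∀ d ∈ u.reverse, d ≤ 1 := fun d hd => hw d (by simp_all)
    have hsplit : (c :: b :: a :: u).reverse = u.reverse ++ [a, b, c] := by simp
    have hdrop : (u.reverse ++ [a, b, c]).dropLast.dropLast = u.reverse ++ [a] := by simp
    rw [hsplit, count_two_repWord_append, length_repWord hr, hdrop, List.dropLast_concat,
      lastDigit_concat]
    split_ifs <;> omega

theorem count2_prefix_general (n : ℕ) (w : List ℕ) (hw : GoodRep w) (hv : valT w = n) :
    occ 2 0 n = valT w.dropLast.dropLast.dropLast + lastDigit w.dropLast.dropLast := by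
  obtain ⟨-, hbin, h111⟩ := hw
  have hprefix := map_TR_range_of_prefix_tribWord (repWord_prefix_tribWord w h111)
  rw [← hv, ← length_repWord hbin, occ_eq_count]
  simp only [zero_add]
  rw [hprefix, count_two_repWord hbin]

/-- For n ≥ 1 with Tribonacci representation e₁ ⋯ e_r,
|TR[0..n-1]|₂ = [e₁ ⋯ e_{r-3}]_T + e_{r-2} (empty word has value 0, eᵢ = 0 for i ≤ 0). -/
theorem count2_prefix (n : ℕ) (hn : 1 ≤ n) (w : List ℕ) (hw : GoodRep w) (hv : valT w = n) :
    occ 2 0 n = valT w.dropLast.dropLast.dropLast + lastDigit w.dropLast.dropLast :=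
  count2_prefix_general n w hw hv
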